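/- Let G be a finite simple graph with a vertex v of degree at least 3, and let G' be a subdivision of G in which every edge incident to v is subdivided at least once. Then in(G') ≥ 3. -/

import Mathlib

open SimpleGraph


namespace Inspection

variable {V : Type*} {W : Type*}

/-- The boundary of a vertex set `X`: vertices of `X` having a neighbor outside `X`. -/
def boundary (G : SimpleGraph V) (X : Set V) : Set V :=
  {v | v ∈ X ∧ ∃ w, w ∉ X ∧ G.Adj v w}

/-- The set of neighbors of a vertex set `X`. -/
def nbrSet (G : SimpleGraph V) (X : Set V) : Set V :=
  {v | ∃ u ∈ X, G.Adj u v}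

/-- The fully cleared sets of a search `S` (indexed so that turn `t ≥ 1` inspects `S t`):
`FC 0 = ∅`, and `FC (t+1) = PC (t+1) \ ∂(PC (t+1))` where `PC (t+1) = FC t ∪ S (t+1)`. -/
def FC (G : SimpleGraph V) (S : ℕ → Set V) : ℕ → Set V
  | 0 => ∅
  | t + 1 => (FC G S t ∪ S (t + 1)) \ boundary G (FC G S t ∪ S (t + 1))

/-- There is a successful `k`-search on `G`: a finite sequence `S 1, ..., S ℓ` of sets of
size at most `k` whose final fully cleared set is all of `V`. -/
def SuccessfulSearch (G : SimpleGraph V) (k : ℕ) : Prop :=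
  ∃ (ℓ : ℕ) (S : ℕ → Set V),
    (∀ t, 1 ≤ t → t ≤ ℓ → (S t).ncard ≤ k) ∧ FC G S ℓ = Set.univ

/-- The inspection number of `G`: the least `k` admitting a successful `k`-search. -/
noncomputable def inspectionNumber (G : SimpleGraph V) : ℕ :=
  sInf {k | SuccessfulSearch G k}

/-- There is a successful monotonic `k`-search on `G`. -/
def SuccessfulMonotonicSearch (G : SimpleGraph V) (k : ℕ) : Prop :=
  ∃ (ℓ : ℕ) (S : ℕ → Set V),
    (∀ t, 1 ≤ t → t ≤ ℓ → (S t).ncard ≤ k) ∧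
    (∀ i j, i ≤ j → j ≤ ℓ → FC G S i ⊆ FC G S j) ∧
    FC G S ℓ = Set.univ

/-- The monotonic inspection number of `G`. -/
noncomputable def monoInspectionNumber (G : SimpleGraph V) : ℕ :=
  sInf {k | SuccessfulMonotonicSearch G k}

/-- A path decomposition `X 1, ..., X ℓ` of `G`: every edge is contained in some bag, and
for `i ≤ j ≤ k` we have `X i ∩ X k ⊆ X j`. -/
def IsPathDecomp (G : SimpleGraph V) (ℓ : ℕ) (X : ℕ → Set V) : Prop :=
  (∀ u v : V, G.Adj u v → ∃ i, 1 ≤ i ∧ i ≤ ℓ ∧ u ∈ X i ∧ v ∈ X i) ∧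
  (∀ i j k, 1 ≤ i → i ≤ j → j ≤ k → k ≤ ℓ → X i ∩ X k ⊆ X j)

/-- The pathwidth of `G`: the least `w` such that `G` has a path decomposition all of whose
bags have size at most `w + 1`. -/
noncomputable def pathwidth (G : SimpleGraph V) : ℕ :=
  sInf {w | ∃ (ℓ : ℕ) (X : ℕ → Set V), IsPathDecomp G ℓ X ∧
    ∀ i, 1 ≤ i → i ≤ ℓ → (X i).ncard ≤ w + 1}

/-- Witness data exhibiting `H` as a subdivision of `G`: an injection `f` of the vertices of
`G` into those of `H` and, for each edge of `G`, a path of `H` between the images of its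
endpoints, these paths being internally disjoint from each other and from the image of `f`,
and jointly covering all vertices and edges of `H`. -/
structure SubdivisionData (G : SimpleGraph V) (H : SimpleGraph W) where
  f : V → W
  inj : Function.Injective f
  walk : ∀ {u v : V}, G.Adj u v → H.Walk (f u) (f v)
  isPath : ∀ {u v : V} (h : G.Adj u v), (walk h).IsPath
  symm : ∀ {u v : V} (h : G.Adj u v), walk h.symm = (walk h).reverse
  disj : ∀ {u v x y : V} (h₁ : G.Adj u v) (h₂ : G.Adj x y), s(u, v) ≠ s(x, y) →
      ∀ w : W, w ∈ (walk h₁).support → w ∈ (walk h₂).support → w ∈ Set.range f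
  branch : ∀ {u v : V} (h : G.Adj u v) (w : W),
      w ∈ (walk h).support → w ∈ Set.range f → w = f u ∨ w = f v
  cover_vert : ∀ w : W, w ∈ Set.range f ∨ ∃ (u v : V) (h : G.Adj u v), w ∈ (walk h).support
  cover_edge : ∀ e ∈ H.edgeSet, ∃ (u v : V) (h : G.Adj u v), e ∈ (walk h).edges

/-- `H` is a subdivision of `G`. -/
def IsSubdivision (G : SimpleGraph V) (H : SimpleGraph W) : Prop :=
  Nonempty (SubdivisionData G H)

/-- The topological inspection number of `G`: the least `k` such that every subdivision of
`G` has a further subdivision with inspection number at most `k`. -/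
noncomputable def topInspectionNumber (G : SimpleGraph V) : ℕ :=
  sInf {k | ∀ (W' : Type) (H : SimpleGraph W'), IsSubdivision G H →
    ∃ (W'' : Type) (H' : SimpleGraph W''), IsSubdivision H H' ∧ inspectionNumber H' ≤ k}


/-!
`G'` contains a spider: the claw `K₁,₃` with every edge subdivided once, centred at `v` and
with legs along three of the paths replacing the edges at `v`. No search with two searchers
clears a spider, because the cleared set stays *guarded*: the centre is uncleared, and once a
middle vertex is cleared the other two legs are uncleared. Indeed, clearing a middle vertex
needs the centre searched in the same round; the one remaining searcher cannot at the same
time cover the two middle vertices needed to clear the centre, nor the leg vertices that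
were uncleared before.
-/

theorem _root_.Set.nonempty_fin_embedding_of_le_ncard {α : Type*} {s : Set α} {n : ℕ}
    (h : n ≤ s.ncard) : Nonempty (Fin n ↪ s) := by
  rcases s.finite_or_infinite with hs | hs
  · have := hs.fintype
    refine Function.Embedding.nonempty_of_card_le ?_
    rwa [Fintype.card_fin, ← Nat.card_eq_fintype_card, Nat.card_coe_set_eq]
  · have := hs.to_subtype
    exact ⟨Fin.valEmbedding.trans (Infinite.natEmbedding s)⟩

theorem _root_.Set.two_lt_ncard_of_mem {α : Type*} [Finite α] {s : Set α} {x y z : α}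
    (hx : x ∈ s) (hy : y ∈ s) (hz : z ∈ s) (hxy : x ≠ y) (hxz : x ≠ z) (hyz : y ≠ z) :
    2 < s.ncard :=
  (Set.two_lt_ncard_iff s.toFinite).2 ⟨x, y, z, hx, hy, hz, hxy, hxz, hyz⟩

lemma mem_diff_boundary_iff {H : SimpleGraph W} {X : Set W} {z : W} :
    z ∈ X \ boundary H X ↔ z ∈ X ∧ ∀ y, H.Adj z y → y ∈ X := by
  constructor
  · rintro ⟨hz, hb⟩
    exact ⟨hz, fun y hy => by_contra fun hyX => hb ⟨hz, y, hyX, hy⟩⟩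
  · rintro ⟨hz, hN⟩
    exact ⟨hz, fun ⟨_, y, hyX, hy⟩ => hyX (hN y hy)⟩

lemma SuccessfulSearch.mono {H : SimpleGraph W} {k k' : ℕ} (h : SuccessfulSearch H k)
    (hk : k ≤ k') : SuccessfulSearch H k' :=
  let ⟨ℓ, S, hS, hFC⟩ := h
  ⟨ℓ, S, fun t h₁ h₂ => (hS t h₁ h₂).trans hk, hFC⟩

lemma successfulSearch_card [Finite W] (H : SimpleGraph W) : SuccessfulSearch H (Nat.card W) :=
  ⟨1, fun _ => Set.univ, fun _ _ _ => (Set.ncard_univ W).le, by simp [FC, boundary]⟩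

lemma lt_inspectionNumber_of_not_successfulSearch [Finite W] {H : SimpleGraph W} {k : ℕ}
    (h : ¬SuccessfulSearch H k) : k < inspectionNumber H := by
  by_contra! hle
  have hmin : SuccessfulSearch H (inspectionNumber H) :=
    Nat.sInf_mem (s := {k | SuccessfulSearch H k}) ⟨_, successfulSearch_card H⟩
  exact h (hmin.mono hle)

/-- A claw `K₁,₃` in `H` with every edge subdivided once, the legs being
`center - mid i - tip i`; the tips need not be distinct. -/
structure Spider (H : SimpleGraph W) where
  center : W
  mid : Fin 3 → W
  tip : Fin 3 → W
  adj_mid : ∀ i, H.Adj center (mid i)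
  adj_tip : ∀ i, H.Adj (mid i) (tip i)
  center_ne_tip : ∀ i, center ≠ tip i
  mid_injective : Function.Injective mid

namespace Spider

variable {H : SimpleGraph W} (P : Spider H)

def Guarded (F : Set W) : Prop :=
  P.center ∉ F ∧ ∀ a b, a ≠ b → P.mid a ∈ F → P.mid b ∉ F ∧ P.tip b ∉ F

lemma guarded_empty : P.Guarded ∅ :=
  ⟨id, fun _ _ _ h => h.elim⟩

variable {P} {F S : Set W}

lemma Guarded.center_notMem_diff_boundary [Finite W] (hF : P.Guarded F) (hS : S.ncard ≤ 2) :
    P.center ∉ (F ∪ S) \ boundary H (F ∪ S) := by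
  intro hc
  obtain ⟨hcX, hN⟩ := mem_diff_boundary_iff.1 hc
  have hcS : P.center ∈ S := hcX.resolve_left hF.1
  have hmidX (i : Fin 3) : P.mid i ∈ F ∪ S := hN _ (P.adj_mid i)
  have not_two_mid_notMem {i j : Fin 3} (hij : i ≠ j) (hi : P.mid i ∉ F)
      (hj : P.mid j ∉ F) : False :=
    (Set.two_lt_ncard_of_mem hcS ((hmidX i).resolve_left hi) ((hmidX j).resolve_left hj)
      (P.adj_mid i).ne (P.adj_mid j).ne (P.mid_injective.ne hij)).not_ge hS
  by_cases h0 : P.mid 0 ∈ F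
  · exact not_two_mid_notMem (by decide : (1 : Fin 3) ≠ 2)
      (hF.2 0 1 (by decide) h0).1 (hF.2 0 2 (by decide) h0).1
  by_cases h1 : P.mid 1 ∈ F
  · exact not_two_mid_notMem (by decide : (0 : Fin 3) ≠ 2) h0 (hF.2 1 2 (by decide) h1).1
  · exact not_two_mid_notMem (by decide : (0 : Fin 3) ≠ 1) h0 h1

lemma Guarded.not_leg_mem_of_mid_mem_diff_boundary [Finite W] (hF : P.Guarded F)
    (hS : S.ncard ≤ 2) {a b : Fin 3} (hab : a ≠ b)
    (ha : P.mid a ∈ (F ∪ S) \ boundary H (F ∪ S)) :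
    ¬(P.mid b ∈ F ∪ S ∧ P.tip b ∈ F ∪ S) := by
  rintro ⟨hmbX, htbX⟩
  obtain ⟨haX, hNa⟩ := mem_diff_boundary_iff.1 ha
  have hcS : P.center ∈ S := (hNa _ (P.adj_mid a).symm).resolve_left hF.1
  by_cases haF : P.mid a ∈ F
  · obtain ⟨hmbF, htbF⟩ := hF.2 a b hab haF
    exact (Set.two_lt_ncard_of_mem hcS (hmbX.resolve_left hmbF) (htbX.resolve_left htbF)
      (P.adj_mid b).ne (P.center_ne_tip b) (P.adj_tip b).ne).not_ge hS
  have haS := haX.resolve_left haF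
  by_cases hbF : P.mid b ∈ F
  · have htaS := (hNa _ (P.adj_tip a)).resolve_left (hF.2 b a hab.symm hbF).2
    exact (Set.two_lt_ncard_of_mem hcS haS htaS
      (P.adj_mid a).ne (P.center_ne_tip a) (P.adj_tip a).ne).not_ge hS
  · exact (Set.two_lt_ncard_of_mem hcS haS (hmbX.resolve_left hbF)
      (P.adj_mid a).ne (P.adj_mid b).ne (P.mid_injective.ne hab)).not_ge hS

lemma Guarded.diff_boundary [Finite W] (hF : P.Guarded F) (hS : S.ncard ≤ 2) :
    P.Guarded ((F ∪ S) \ boundary H (F ∪ S)) := by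
  refine ⟨hF.center_notMem_diff_boundary hS, fun a b hab ha => ⟨fun hb => ?_, fun hb => ?_⟩⟩
  · obtain ⟨hbX, hNb⟩ := mem_diff_boundary_iff.1 hb
    exact hF.not_leg_mem_of_mid_mem_diff_boundary hS hab ha ⟨hbX, hNb _ (P.adj_tip b)⟩
  · obtain ⟨hbX, hNb⟩ := mem_diff_boundary_iff.1 hb
    exact hF.not_leg_mem_of_mid_mem_diff_boundary hS hab ha ⟨hNb _ (P.adj_tip b).symm, hbX⟩

variable (P)

lemma guarded_FC [Finite W] {S : ℕ → Set W} {ℓ : ℕ}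
    (hS : ∀ t, 1 ≤ t → t ≤ ℓ → (S t).ncard ≤ 2) : ∀ t ≤ ℓ, P.Guarded (FC H S t)
  | 0, _ => P.guarded_empty
  | t + 1, ht => (guarded_FC hS t (by omega)).diff_boundary (hS _ (by omega) ht)

end Spider

lemma Spider.not_successfulSearch_two [Finite W] {H : SimpleGraph W} (P : Spider H) :
    ¬SuccessfulSearch H 2 := fun ⟨ℓ, _, hS, hFC⟩ =>
  (P.guarded_FC hS ℓ le_rfl).1 (hFC ▸ Set.mem_univ _)

lemma Spider.three_le_inspectionNumber [Finite W] {H : SimpleGraph W} (P : Spider H) :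
    3 ≤ inspectionNumber H :=
  lt_inspectionNumber_of_not_successfulSearch P.not_successfulSearch_two

lemma SubdivisionData.nonempty_spider {V : Type*} {G : SimpleGraph V} {H : SimpleGraph W}
    (D : SubdivisionData G H) {v : V} (hv : 3 ≤ (G.neighborSet v).ncard)
    (hsub : ∀ (w : V) (h : G.Adj v w), 2 ≤ (D.walk h).length) : Nonempty (Spider H) := by
  obtain ⟨w⟩ := Set.nonempty_fin_embedding_of_le_ncard hv
  have hadj (i : Fin 3) : G.Adj v (w i) := (w i).2
  have hlen (i : Fin 3) : 2 ≤ (D.walk (hadj i)).length := hsub _ (hadj i)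
  have getVert_ne_start (i : Fin 3) {n : ℕ} (hn : n ≤ 2) (hn0 : n ≠ 0) :
      (D.walk (hadj i)).getVert n ≠ D.f v := fun h =>
    hn0 (((D.isPath (hadj i)).getVert_eq_start_iff (hn.trans (hlen i))).1 h)
  refine ⟨{
    center := D.f v
    mid := fun i => (D.walk (hadj i)).getVert 1
    tip := fun i => (D.walk (hadj i)).getVert 2
    adj_mid := fun i => by
      simpa using (D.walk (hadj i)).adj_getVert_succ (i := 0) (by linarith [hlen i])
    adj_tip := fun i => (D.walk (hadj i)).adj_getVert_succ (i := 1) (by linarith [hlen i])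
    center_ne_tip := fun i => (getVert_ne_start i le_rfl (by decide)).symm
    mid_injective := fun i j (hij : (D.walk _).getVert 1 = (D.walk _).getVert 1) => ?_ }⟩
  by_contra hne
  have hedge : s(v, (w i : V)) ≠ s(v, w j) := fun h =>
    hne (w.injective (Subtype.ext (Sym2.congr_right.1 h)))
  have hmem_i := (D.walk (hadj i)).getVert_mem_support 1
  have hmem_j : (D.walk (hadj i)).getVert 1 ∈ (D.walk (hadj j)).support :=
    hij ▸ (D.walk (hadj j)).getVert_mem_support 1
  rcases D.branch (hadj i) _ hmem_i (D.disj (hadj i) (hadj j) hedge _ hmem_i hmem_j) with h | h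
  · exact getVert_ne_start i (by decide) (by decide) h
  · have := ((D.isPath (hadj i)).getVert_eq_end_iff (by linarith [hlen i])).1 h
    linarith [hlen i]

theorem three_le_inspectionNumber_of_subdivided_branch_general {V W : Type} [Fintype W]
    (G : SimpleGraph V) (G' : SimpleGraph W) (v : V) (hv : 3 ≤ (G.neighborSet v).ncard)
    (D : SubdivisionData G G')
    (hsub : ∀ (w : V) (h : G.Adj v w), 2 ≤ (D.walk h).length) :
    3 ≤ inspectionNumber G' := by
  obtain ⟨P⟩ := D.nonempty_spider hv hsub
  exact P.three_le_inspectionNumber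

/-- If `G` has a vertex `v` of degree at least `3` and `G'` is a subdivision
of `G` in which every edge incident to `v` is subdivided at least once (i.e. the
corresponding path has length at least `2`), then `in(G') ≥ 3`. -/
theorem three_le_inspectionNumber_of_subdivided_branch {V W : Type} [Fintype V] [Fintype W]
    (G : SimpleGraph V) (G' : SimpleGraph W) (v : V) (hv : 3 ≤ (G.neighborSet v).ncard)
    (D : SubdivisionData G G')
    (hsub : ∀ (w : V) (h : G.Adj v w), 2 ≤ (D.walk h).length) :
    3 ≤ inspectionNumber G' :=
  three_le_inspectionNumber_of_subdivided_branch_general G G' v hv D hsub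

end Inspection
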